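/- arXiv:2502.09248 — 5 statements merged into one kernel-verified Lean document; each statement's English description precedes it below -/
import Mathlib

section
/- (Generic cost function for the KL divergence.) Let p, k ≥ 1. Let Ψ̃ be a real symmetric positive definite (p+k)×(p+k) matrix written in blocks Ψ̃ = fromBlocks(Ψ_p, Ψ_pnᵀ, Ψ_pn, Ψ_n) with Ψ_p of size p×p, Ψ_n of size k×k and Ψ_pn of size k×p, and let Σ̃ ∈ ℂ^{(p+k)×(p+k)} be written in blocks Σ̃ = fromBlocks(Σ_p, Σ_pnᴴ, Σ_pn, Σ_n). Define F = Ψ_p − Ψ_pnᵀ Ψ_n⁻¹ Ψ_pn, D = Ψ_n − Ψ_pn Ψ_p⁻¹ Ψ_pnᵀ, A = −D⁻¹ Ψ_pn Ψ_p⁻¹ and M = D⁻¹ ∘ Σ_n. Then for all w ∈ ℂ^p and w̄ ∈ ℂ^k, writing w̃ ∈ ℂ^{p+k} for their concatenation, one has w̃ᴴ (Ψ̃⁻¹ ∘ Σ̃) w̃ = wᴴ (F⁻¹ ∘ Σ_p) w + wᴴ (Aᵀ ∘ Σ_pnᴴ) w̄ + w̄ᴴ (A ∘ Σ_pn) w +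 w̄ᴴ M w̄. -/
open Matrix

lemma hadamard_fromBlocks' {α l m n o : Type*} [Mul α]
    (A A' : Matrix n l α) (B B' : Matrix n m α) (C C' : Matrix o l α) (D D' : Matrix o m α) :
    Matrix.hadamard (Matrix.fromBlocks A B C D) (Matrix.fromBlocks A' B' C' D')
      = Matrix.fromBlocks (Matrix.hadamard A A') (Matrix.hadamard B B')
          (Matrix.hadamard C C') (Matrix.hadamard D D') := by
  ext (i | i) (j | j) <;> rfl

lemma star_sum_elim' {α m n : Type*} [Star α] (u : m → α) (v : n → α) :
    star (Sum.elim u v) = Sum.elim (star u) (star v) := by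
  funext x; cases x <;> rfl

/-- Generic cost function for the KL divergence: block decomposition of the
quadratic form `w̃ᴴ (Ψ̃⁻¹ ∘ Σ̃) w̃` where `Ψ̃` is real symmetric positive definite
with blocks `Ψ_p, Ψ_pnᵀ, Ψ_pn, Ψ_n` and `Σ̃` has blocks `Σ_p, Σ_pnᴴ, Σ_pn, Σ_n`. -/
theorem kl_cost_block_decomposition {p k : ℕ} (hp : 1 ≤ p) (hk : 1 ≤ k)
    (Psip : Matrix (Fin p) (Fin p) ℝ) (Psipn : Matrix (Fin k) (Fin p) ℝ)
    (Psin : Matrix (Fin k) (Fin k) ℝ)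
    (hPsi : (Matrix.fromBlocks Psip Psipnᵀ Psipn Psin).PosDef)
    (Sigp : Matrix (Fin p) (Fin p) ℂ) (Sigpn : Matrix (Fin k) (Fin p) ℂ)
    (Sign : Matrix (Fin k) (Fin k) ℂ)
    (F : Matrix (Fin p) (Fin p) ℝ) (hF : F = Psip - Psipnᵀ * Psin⁻¹ * Psipn)
    (D : Matrix (Fin k) (Fin k) ℝ) (hD : D = Psin - Psipn * Psip⁻¹ * Psipnᵀ)
    (A : Matrix (Fin k) (Fin p) ℝ) (hA : A = -(D⁻¹ * Psipn * Psip⁻¹))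
    (M : Matrix (Fin k) (Fin k) ℂ)
    (hM : M = Matrix.hadamard ((D⁻¹).map Complex.ofReal) Sign)
    (w : Fin p → ℂ) (wb : Fin k → ℂ) :
    star (Sum.elim w wb) ⬝ᵥ
        (Matrix.hadamard
          (((Matrix.fromBlocks Psip Psipnᵀ Psipn Psin)⁻¹).map Complex.ofReal)
          (Matrix.fromBlocks Sigp Sigpnᴴ Sigpn Sign)) *ᵥ (Sum.elim w wb)
      = star w ⬝ᵥ (Matrix.hadamard ((F⁻¹).map Complex.ofReal) Sigp) *ᵥ w
        + star w ⬝ᵥ (Matrix.hadamard ((Aᵀ).map Complex.ofReal) (Sigpnᴴ)) *ᵥ wb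
        + star wb ⬝ᵥ (Matrix.hadamard (A.map Complex.ofReal) Sigpn) *ᵥ w
        + star wb ⬝ᵥ M *ᵥ wb := by
  -- symmetry of the blocks
  have hsym : (Matrix.fromBlocks Psip Psipnᵀ Psipn Psin)ᴴ
      = Matrix.fromBlocks Psip Psipnᵀ Psipn Psin := hPsi.1
  rw [conjTranspose_eq_transpose_of_trivial, fromBlocks_transpose] at hsym
  have hPp : Psipᵀ = Psip := by
    have := congrArg Matrix.toBlocks₁₁ hsym
    simpa [Matrix.toBlocks_fromBlocks₁₁] using this
  have hPn : Psinᵀ = Psin := by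
    have := congrArg Matrix.toBlocks₂₂ hsym
    simpa [Matrix.toBlocks_fromBlocks₂₂] using this
  -- positive definiteness of the diagonal blocks
  have hPsipPD : Psip.PosDef := by
    refine Matrix.PosDef.of_dotProduct_mulVec_pos (show _ᴴ = _ by rw [conjTranspose_eq_transpose_of_trivial]; assumption) fun x hx => ?_
    have hx' : (Sum.elim x 0 : Fin p ⊕ Fin k → ℝ) ≠ 0 := by
      intro h
      exact hx (funext fun i => congrFun h (Sum.inl i))
    have := hPsi.dotProduct_mulVec_pos hx'
    simpa [star_sum_elim', fromBlocks_mulVec, sumElim_dotProduct_sumElim] using this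
  have hPsinPD : Psin.PosDef := by
    refine Matrix.PosDef.of_dotProduct_mulVec_pos (show _ᴴ = _ by rw [conjTranspose_eq_transpose_of_trivial]; assumption) fun x hx => ?_
    have hx' : (Sum.elim 0 x : Fin p ⊕ Fin k → ℝ) ≠ 0 := by
      intro h
      exact hx (funext fun i => congrFun h (Sum.inr i))
    have := hPsi.dotProduct_mulVec_pos hx'
    simpa [star_sum_elim', fromBlocks_mulVec, sumElim_dotProduct_sumElim] using this
  letI := hPsipPD.isUnit.invertible
  letI := hPsinPD.isUnit.invertible
  letI := hPsi.isUnit.invertible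
  have iD : Invertible D := by
    rw [hD, ← invOf_eq_nonsing_inv]
    exact invertibleOfFromBlocks₁₁Invertible Psip Psipnᵀ Psipn Psin
  have iF : Invertible F := by
    rw [hF, ← invOf_eq_nonsing_inv]
    exact invertibleOfFromBlocks₂₂Invertible Psip Psipnᵀ Psipn Psin
  -- more symmetry
  have hPpi : (Psip⁻¹)ᵀ = Psip⁻¹ := by rw [Matrix.transpose_nonsing_inv, hPp]
  have hDs : Dᵀ = D := by
    rw [hD]
    simp [transpose_sub, transpose_mul, hPn, hPpi, Matrix.mul_assoc]
  have hDi : (D⁻¹)ᵀ = D⁻¹ := by rw [Matrix.transpose_nonsing_inv, hDs]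
  -- key algebraic identity
  have key : D⁻¹ * Psipn * Psip⁻¹ = Psin⁻¹ * Psipn * F⁻¹ := by
    have h1 : Psipn * Psip⁻¹ * F = D * (Psin⁻¹ * Psipn) := by
      rw [hF, hD]
      simp only [Matrix.mul_sub, Matrix.sub_mul, Matrix.mul_assoc,
        Matrix.inv_mul_cancel_left_of_invertible, Matrix.mul_inv_cancel_left_of_invertible,
        Matrix.inv_mul_of_invertible, Matrix.mul_inv_of_invertible, Matrix.mul_one]
    have h2 : Psipn * Psip⁻¹ = D * (Psin⁻¹ * Psipn) * F⁻¹ := by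
      rw [← h1, Matrix.mul_inv_cancel_right_of_invertible]
    rw [Matrix.mul_assoc, h2, ← Matrix.mul_assoc D⁻¹,
      Matrix.inv_mul_cancel_left_of_invertible]
  have hAt : Aᵀ = -(Psip⁻¹ * (Psipnᵀ * D⁻¹)) := by
    rw [hA]
    simp [transpose_mul, hPpi, hDi, Matrix.mul_assoc]
  have hA' : A = -(Psin⁻¹ * (Psipn * F⁻¹)) := by
    rw [hA, key, Matrix.mul_assoc]
  -- the block inverse formula
  have hinv : (Matrix.fromBlocks Psip Psipnᵀ Psipn Psin)⁻¹
      = Matrix.fromBlocks F⁻¹ Aᵀ A D⁻¹ := by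
    apply Matrix.inv_eq_right_inv
    have g11 : Psip * F⁻¹ + Psipnᵀ * A = 1 := by
      rw [hA', Matrix.mul_neg, ← sub_eq_add_neg, ← Matrix.mul_assoc, ← Matrix.mul_assoc,
        ← Matrix.sub_mul, ← hF, Matrix.mul_inv_of_invertible]
    have g12 : Psip * Aᵀ + Psipnᵀ * D⁻¹ = 0 := by
      rw [hAt, Matrix.mul_neg, Matrix.mul_inv_cancel_left_of_invertible, neg_add_cancel]
    have g21 : Psipn * F⁻¹ + Psin * A = 0 := by
      rw [hA', Matrix.mul_neg, Matrix.mul_inv_cancel_left_of_invertible, add_neg_cancel]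
    have g22 : Psipn * Aᵀ + Psin * D⁻¹ = 1 := by
      rw [hAt, Matrix.mul_neg, neg_add_eq_sub, ← Matrix.mul_assoc, ← Matrix.mul_assoc,
        ← Matrix.sub_mul, ← hD, Matrix.mul_inv_of_invertible]
    rw [fromBlocks_multiply, g11, g12, g21, g22, fromBlocks_one]
  rw [hinv, fromBlocks_map, hadamard_fromBlocks', star_sum_elim', fromBlocks_mulVec,
    sumElim_dotProduct_sumElim, dotProduct_add, dotProduct_add, hM,
    Sum.elim_comp_inl, Sum.elim_comp_inr]
  ring
end

section
/- (Surrogate function for the Frobenius norm.) Let p, k ≥ 1, let Σ_pn ∈ ℂ^{k×p} and let Σ_n ∈ ℂ^{k×k} be Hermitian such that Q := |Σ_n| ∘ Σ_n is positive semidefinite. Set P := |Σ_pn| ∘ Σ_pn. Fix w ∈ ℂ^p and define, for w̄ ∈ ℂ^k, f(w̄) = −4·Re(w̄ᴴ P w) − 2·Re(w̄ᴴ Q w̄) and g(w̄ | w̄⁰) = −Re(w̄ᴴ · 4·[P w + Q w̄⁰]). Then for every w̄⁰ ∈ ℂ^k and every w̄ ∈ ℂ^k, f(w̄) − f(w̄⁰)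 ≤ g(w̄ | w̄⁰) − g(w̄⁰ | w̄⁰); i.e. w̄ ↦ g(w̄ | w̄⁰) + f(w̄⁰) − g(w̄⁰ | w̄⁰) majorizes f with equality at w̄⁰. -/
open Matrix
open scoped ComplexOrder

/-- The entrywise modulus of a complex matrix, identified with its complex image. -/
noncomputable def matAbs {m n : Type*} (B : Matrix m n ℂ) : Matrix m n ℂ :=
  Matrix.of fun i j => ((‖B i j‖ : ℝ) : ℂ)

/-! Up to an additive constant, `g(· | w̄⁰)` is the linearisation of `f` at `w̄⁰`. Since `Q` is
positive semidefinite, `f` is concave and so lies below each of its tangent planes; the gap is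
exactly `2 Re((w̄ - w̄⁰)ᴴ Q (w̄ - w̄⁰)) ≥ 0`. -/

namespace Matrix

variable {𝕜 n : Type*} [RCLike 𝕜] [Fintype n] {A : Matrix n n 𝕜}

open RCLike

theorem IsHermitian.re_dotProduct_mulVec_comm (hA : A.IsHermitian) (x y : n → 𝕜) :
    re (star y ⬝ᵥ A *ᵥ x) = re (star x ⬝ᵥ A *ᵥ y) := by
  rw [star_dotProduct, star_mulVec, hA.eq, ← dotProduct_mulVec, RCLike.star_def, conj_re]

theorem IsHermitian.re_dotProduct_mulVec_sub (hA : A.IsHermitian) (x y : n → 𝕜) :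
    re (star (x - y) ⬝ᵥ A *ᵥ (x - y)) =
      re (star x ⬝ᵥ A *ᵥ x) - 2 * re (star x ⬝ᵥ A *ᵥ y) + re (star y ⬝ᵥ A *ᵥ y) := by
  rw [star_sub, mulVec_sub, dotProduct_sub, sub_dotProduct, sub_dotProduct]
  simp only [map_sub, hA.re_dotProduct_mulVec_comm x y]
  ring

theorem PosSemidef.two_mul_re_dotProduct_mulVec_le (hA : A.PosSemidef) (x y : n → 𝕜) :
    2 * re (star x ⬝ᵥ A *ᵥ y) - re (star y ⬝ᵥ A *ᵥ y) ≤ re (star x ⬝ᵥ A *ᵥ x) := by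
  have hgap := (RCLike.nonneg_iff.mp (hA.dotProduct_mulVec_nonneg (x - y))).1
  rw [hA.isHermitian.re_dotProduct_mulVec_sub] at hgap
  linarith

end Matrix

theorem frobenius_surrogate_majorizes_general {p k : ℕ}
    (Sigpn : Matrix (Fin k) (Fin p) ℂ) (Sign : Matrix (Fin k) (Fin k) ℂ)
    (hQ : (Matrix.hadamard (matAbs Sign) Sign).PosSemidef)
    (w : Fin p → ℂ)
    (f : (Fin k → ℂ) → ℝ)
    (hf : ∀ wb, f wb =
      -(4 * (star wb ⬝ᵥ (Matrix.hadamard (matAbs Sigpn) Sigpn) *ᵥ w).re)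
        - 2 * (star wb ⬝ᵥ (Matrix.hadamard (matAbs Sign) Sign) *ᵥ wb).re)
    (g : (Fin k → ℂ) → (Fin k → ℂ) → ℝ)
    (hg : ∀ wb wb0, g wb wb0 =
      -(star wb ⬝ᵥ ((4 : ℂ) •
        ((Matrix.hadamard (matAbs Sigpn) Sigpn) *ᵥ w
          + (Matrix.hadamard (matAbs Sign) Sign) *ᵥ wb0))).re) :
    ∀ wb0 wb : Fin k → ℂ, f wb - f wb0 ≤ g wb wb0 - g wb0 wb0 := by
  intro wb0 wb
  have tangent := hQ.two_mul_re_dotProduct_mulVec_le wb wb0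
  simp only [RCLike.re_to_complex] at tangent
  simp only [hf, hg, dotProduct_smul, dotProduct_add, smul_eq_mul, mul_add, Complex.add_re,
    Complex.mul_re, Complex.re_ofNat, Complex.im_ofNat, zero_mul, sub_zero]
  linarith

/-- Surrogate function for the Frobenius norm: the cost
`f(w̄) = −4·Re(w̄ᴴ P w) − 2·Re(w̄ᴴ Q w̄)` with `P = |Σ_pn| ∘ Σ_pn`,
`Q = |Σ_n| ∘ Σ_n` positive semidefinite, is majorized (up to an additive constant,
with equality at `w̄⁰`) by `g(w̄|w̄⁰) = −Re(w̄ᴴ · 4·[P w + Q w̄⁰])`. -/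
theorem frobenius_surrogate_majorizes {p k : ℕ} (hp : 1 ≤ p) (hk : 1 ≤ k)
    (Sigpn : Matrix (Fin k) (Fin p) ℂ) (Sign : Matrix (Fin k) (Fin k) ℂ)
    (hSign : Sign.IsHermitian)
    (hQ : (Matrix.hadamard (matAbs Sign) Sign).PosSemidef)
    (w : Fin p → ℂ)
    (f : (Fin k → ℂ) → ℝ)
    (hf : ∀ wb, f wb =
      -(4 * (star wb ⬝ᵥ (Matrix.hadamard (matAbs Sigpn) Sigpn) *ᵥ w).re)
        - 2 * (star wb ⬝ᵥ (Matrix.hadamard (matAbs Sign) Sign) *ᵥ wb).re)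
    (g : (Fin k → ℂ) → (Fin k → ℂ) → ℝ)
    (hg : ∀ wb wb0, g wb wb0 =
      -(star wb ⬝ᵥ ((4 : ℂ) •
        ((Matrix.hadamard (matAbs Sigpn) Sigpn) *ᵥ w
          + (Matrix.hadamard (matAbs Sign) Sign) *ᵥ wb0))).re) :
    ∀ wb0 wb : Fin k → ℂ, f wb - f wb0 ≤ g wb wb0 - g wb0 wb0 :=
  frobenius_surrogate_majorizes_general Sigpn Sign hQ w f hf g hg
end

section
/- Let n ≥ 1, let Ψ be a real symmetric invertible n×n matrix (identified with its complex image), let Σ ∈ ℂ^{n×n} be arbitrary, and let w ∈ 𝕋_n. Then tr((Ψ ∘ (w wᴴ))⁻¹ · Σ) = wᴴ (Ψ⁻¹ ∘ Σ) w. (This identifies the w-dependent part of the Kullback–Leibler divergence between a centered Gaussian with covariance plug-in Σ and a centered Gaussian with structured covariance Ψ ∘ w wᴴ as the classical phase-linking cost wᴴ(Ψ⁻¹ ∘ Σ)w.) -/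
open Matrix

/-- For a real symmetric invertible `Ψ` (identified with its complex image), any
`Σ ∈ ℂ^{n×n}` and `w` on the torus `𝕋_n`,
`tr((Ψ ∘ (w wᴴ))⁻¹ · Σ) = wᴴ (Ψ⁻¹ ∘ Σ) w`: the `w`-dependent part of the KL
divergence is the classical phase-linking cost. -/
theorem trace_kl_cost {n : ℕ} (hn : 1 ≤ n)
    (Psi : Matrix (Fin n) (Fin n) ℝ) (hPsiSym : Psiᵀ = Psi) (hPsi : IsUnit Psi.det)
    (Sig : Matrix (Fin n) (Fin n) ℂ)
    (w : Fin n → ℂ) (hw : ∀ i, ‖w i‖ = 1) :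
    Matrix.trace
        ((Matrix.hadamard (Psi.map Complex.ofReal)
            (Matrix.vecMulVec w (star w)))⁻¹ * Sig)
      = star w ⬝ᵥ (Matrix.hadamard ((Psi⁻¹).map Complex.ofReal) Sig) *ᵥ w := by
  have hcw : ∀ i, (starRingEnd ℂ) (w i) * w i = 1 := by
    intro i
    rw [mul_comm, Complex.mul_conj, ← Complex.sq_norm, hw i]
    norm_num
  -- the complex image of Psi
  have hPsiC : (Psi.map Complex.ofReal) * ((Psi⁻¹).map Complex.ofReal) = 1 := by
    have h1 : Psi * Psi⁻¹ = 1 := Matrix.mul_nonsing_inv _ hPsi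
    ext i j
    have h2 := congrFun (congrFun h1 i) j
    simp only [Matrix.mul_apply, Matrix.one_apply, Matrix.map_apply] at h2 ⊢
    rw [show (∑ x, (Psi i x : ℂ) * (Psi⁻¹ x j : ℂ)) = ((∑ x, Psi i x * Psi⁻¹ x j : ℝ) : ℂ) by push_cast; ring, h2]
    simp [apply_ite Complex.ofReal]
  -- right inverse
  have hinv : (Matrix.hadamard (Psi.map Complex.ofReal) (Matrix.vecMulVec w (star w)))⁻¹
      = Matrix.hadamard ((Psi⁻¹).map Complex.ofReal) (Matrix.vecMulVec w (star w)) := by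
    apply Matrix.inv_eq_right_inv
    ext i k
    have := congrArg (fun M => M i k) hPsiC
    simp only [Matrix.mul_apply, Matrix.hadamard_apply, Matrix.vecMulVec_apply,
      Matrix.map_apply, Pi.star_apply] at this ⊢
    calc ∑ j, Psi i j * Matrix.vecMulVec w (star w) i j *
          ((Psi⁻¹).map Complex.ofReal j k * Matrix.vecMulVec w (star w) j k)
        = w i * star (w k) * ∑ j, (Psi i j : ℂ) * (Psi⁻¹ j k : ℂ)
            * (star (w j) * w j) := by
          rw [Finset.mul_sum]; apply Finset.sum_congr rfl; intro j _
          simp [Matrix.vecMulVec_apply, Matrix.map_apply]; ring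
      _ = w i * star (w k) * (1 : Matrix (Fin n) (Fin n) ℂ) i k := by
          rw [← this]; congr 1
          apply Finset.sum_congr rfl; intro j _
          simp only [RCLike.star_def, hcw j, mul_one]
      _ = _ := by
          by_cases h : i = k
          · subst h; simp only [Matrix.one_apply_eq, mul_one, one_mul]
            rw [mul_comm]; exact hcw i
          · simp [Matrix.one_apply, h]
  -- inverse of Psi is symmetric
  have hsym : ∀ i j, Psi⁻¹ j i = Psi⁻¹ i j := by
    intro i j
    have : (Psi⁻¹)ᵀ = Psi⁻¹ := by
      rw [Matrix.transpose_nonsing_inv, hPsiSym]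
    have h3 := congrFun (congrFun this j) i
    rw [Matrix.transpose_apply] at h3
    exact h3.symm
  rw [hinv]
  simp only [Matrix.trace, Matrix.diag, Matrix.mul_apply, Matrix.hadamard_apply,
    Matrix.vecMulVec_apply, Matrix.map_apply, Pi.star_apply, dotProduct,
    Matrix.mulVec, RCLike.star_def]
  rw [Finset.sum_comm]
  apply Finset.sum_congr rfl; intro i _
  rw [Finset.mul_sum]
  apply Finset.sum_congr rfl; intro j _
  rw [hsym j i]
  ring
end

section
/- Let n ≥ 1, let Σ ∈ ℂ^{n×n} be Hermitian, let Ψ be a real symmetric n×n matrix (identified with its complex image), and let w ∈ 𝕋_n. Then ‖Σ − Ψ ∘ (w wᴴ)‖_F² = ‖Σ‖_F² + ‖Ψ‖_F² − 2·Re(wᴴ (Ψ ∘ Σ) w), where ‖·‖_F denotes the Frobenius norm. In particular, minimizing w ↦ ‖Σ − Ψ ∘ (w wᴴ)‖_F² over 𝕋_n is equivalent to minimizing w ↦ −2·wᴴ (Ψ ∘ Σ) w. -/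
open Matrix

/-- Squared Frobenius norm of a complex matrix: `‖B‖_F² = Σ_{ij} |B_{ij}|²`. -/
noncomputable def frobSq {m n : Type*} [Fintype m] [Fintype n]
    (B : Matrix m n ℂ) : ℝ :=
  ∑ i, ∑ j, ‖B i j‖ ^ 2

/-!
Expand the squared Frobenius norm of a difference entrywise. Since `|wᵢ| = 1`, the Hadamard
factor `w wᴴ` has unimodular entries and does not change `‖Ψ‖_F`; since `Ψ` is real, the cross
term `∑ᵢⱼ Σᵢⱼ · conj(Ψᵢⱼ wᵢ conj wⱼ)` is exactly `wᴴ (Ψ ∘ Σ) w`.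
-/

section FrobeniusFit

variable {m n : Type*} [Fintype m] [Fintype n]

theorem frobSq_sub (A B : Matrix m n ℂ) :
    frobSq (A - B) = frobSq A + frobSq B - 2 * (∑ i, ∑ j, A i j * star (B i j)).re := by
  simp only [frobSq, Complex.re_sum, ← Finset.sum_add_distrib, Finset.mul_sum,
    ← Finset.sum_sub_distrib]
  refine Finset.sum_congr rfl fun i _ => Finset.sum_congr rfl fun j _ => ?_
  simp only [Matrix.sub_apply, Complex.sq_norm, Complex.normSq_sub, Complex.star_def]

theorem frobSq_hadamard_vecMulVec_of_norm_eq_one (A : Matrix m n ℂ) {u : m → ℂ} {v : n → ℂ}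
    (hu : ∀ i, ‖u i‖ = 1) (hv : ∀ j, ‖v j‖ = 1) :
    frobSq (A ⊙ vecMulVec u v) = frobSq A := by
  simp only [frobSq, hadamard_apply, vecMulVec_apply, norm_mul, hu, hv, mul_one]

theorem star_dotProduct_ofReal_hadamard_mulVec (Psi : Matrix m n ℝ) (B : Matrix m n ℂ)
    (v : m → ℂ) (w : n → ℂ) :
    star v ⬝ᵥ (Psi.map Complex.ofReal ⊙ B) *ᵥ w
      = ∑ i, ∑ j, B i j * star ((Psi.map Complex.ofReal ⊙ vecMulVec v (star w)) i j) := by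
  simp only [dotProduct, mulVec, Finset.mul_sum]
  refine Finset.sum_congr rfl fun i _ => Finset.sum_congr rfl fun j _ => ?_
  simp only [Pi.star_apply, hadamard_apply, vecMulVec_apply, map_apply, star_mul',
    Complex.star_def, Complex.conj_ofReal, Complex.conj_conj]
  ring

end FrobeniusFit

theorem frobenius_fit_expansion_general {n : ℕ}
    (Sig : Matrix (Fin n) (Fin n) ℂ)
    (Psi : Matrix (Fin n) (Fin n) ℝ)
    (w : Fin n → ℂ) (hw : ∀ i, ‖w i‖ = 1) :
    frobSq (Sig - Matrix.hadamard (Psi.map Complex.ofReal)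
        (Matrix.vecMulVec w (star w)))
      = frobSq Sig + frobSq (Psi.map Complex.ofReal)
        - 2 * (star w ⬝ᵥ (Matrix.hadamard (Psi.map Complex.ofReal) Sig) *ᵥ w).re := by
  rw [frobSq_sub, frobSq_hadamard_vecMulVec_of_norm_eq_one _ hw (by simpa using hw),
    star_dotProduct_ofReal_hadamard_mulVec]

/-- For `Σ` Hermitian, `Ψ` real symmetric (identified with its complex image) and
`w` on the torus `𝕋_n`:
`‖Σ − Ψ ∘ (w wᴴ)‖_F² = ‖Σ‖_F² + ‖Ψ‖_F² − 2·Re(wᴴ (Ψ ∘ Σ) w)`, so minimizing the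
Frobenius fit over the torus amounts to minimizing `−2·wᴴ (Ψ ∘ Σ) w`. -/
theorem frobenius_fit_expansion {n : ℕ} (hn : 1 ≤ n)
    (Sig : Matrix (Fin n) (Fin n) ℂ) (hSig : Sig.IsHermitian)
    (Psi : Matrix (Fin n) (Fin n) ℝ) (hPsiSym : Psiᵀ = Psi)
    (w : Fin n → ℂ) (hw : ∀ i, ‖w i‖ = 1) :
    frobSq (Sig - Matrix.hadamard (Psi.map Complex.ofReal)
        (Matrix.vecMulVec w (star w)))
      = frobSq Sig + frobSq (Psi.map Complex.ofReal)
        - 2 * (star w ⬝ᵥ (Matrix.hadamard (Psi.map Complex.ofReal) Sig) *ᵥ w).re :=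
  frobenius_fit_expansion_general Sig Psi w hw
end

section
/- (Descent property of the MM iteration for the KL cost.) Let k ≥ 1, B ∈ ℂ^{k×p}, w ∈ ℂ^p, and let M ∈ ℂ^{k×k} be Hermitian with largest eigenvalue λ. Define the cost f(w̄) = 2·Re(w̄ᴴ B w) + Re(w̄ᴴ M w̄) for w̄ ∈ ℂ^k. Let w̄⁰ ∈ 𝕋_k and set u = −B w + (λ·I − M) w̄⁰. If every entry of u is nonzero, then the MM update w̄⁺ := Φ_𝕋(u) lies in 𝕋_k and satisfies f(w̄⁺) ≤ f(w̄⁰). -/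
/-!
With `Q = λ·I − M`, which is positive semidefinite, and `k = zᴴz` on the torus, the cost
satisfies `f(z) = λk − Re(zᴴQz) + 2·Re(zᴴQw̄⁰) − 2·Re(zᴴu)` there. Since
`2·Re(zᴴQw̄⁰) ≤ Re(zᴴQz) + Re(w̄⁰ᴴQw̄⁰)`, on the torus `f` is majorized by
`g(z) = λk + Re(w̄⁰ᴴQw̄⁰) − 2·Re(zᴴu)`, with equality at `z = w̄⁰`. Over the torus
`Re(zᴴu) ≤ ∑ |uᵢ|`, with equality at `z = Φ_𝕋(u)`, so `Φ_𝕋(u)` minimizes `g`, and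
`f(Φ_𝕋(u)) ≤ g(Φ_𝕋(u)) ≤ g(w̄⁰) = f(w̄⁰)`.
-/

open Matrix
open scoped ComplexOrder Pointwise

namespace Matrix

variable {n 𝕜 : Type*} [Fintype n] [RCLike 𝕜]

theorem IsHermitian.posSemidef_smul_one_sub [DecidableEq n] {M : Matrix n n 𝕜}
    (hM : M.IsHermitian) {lam : ℝ} (hlam : ∀ i, hM.eigenvalues i ≤ lam) :
    ((lam : 𝕜) • 1 - M).PosSemidef := by
  have hspec : spectrum 𝕜 ((lam : 𝕜) • 1 - M) = ({(lam : 𝕜)} : Set 𝕜) - spectrum 𝕜 M := by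
    rw [spectrum.singleton_sub_eq, Algebra.algebraMap_eq_smul_one]
  refine posSemidef_iff_isHermitian_and_spectrum_nonneg.mpr
    ⟨(isHermitian_one.smul (RCLike.conj_ofReal lam)).sub hM, ?_⟩
  rw [hspec, hM.spectrum_eq_image_range]
  rintro _ ⟨_, rfl, _, ⟨_, ⟨i, rfl⟩, rfl⟩, rfl⟩
  show 0 ≤ (lam : 𝕜) - hM.eigenvalues i
  exact_mod_cast sub_nonneg.mpr (hlam i)

theorem PosSemidef.two_mul_re_dotProduct_mulVec_le_s12 {Q : Matrix n n 𝕜} (hQ : Q.PosSemidef)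
    (a b : n → 𝕜) :
    2 * RCLike.re (star a ⬝ᵥ Q *ᵥ b) ≤
      RCLike.re (star a ⬝ᵥ Q *ᵥ a) + RCLike.re (star b ⬝ᵥ Q *ᵥ b) := by
  have hsymm : star b ⬝ᵥ Q *ᵥ a = star (star a ⬝ᵥ Q *ᵥ b) := by
    rw [star_dotProduct, star_mulVec, hQ.isHermitian.eq, ← dotProduct_mulVec]
  have h := hQ.re_dotProduct_nonneg (a - b)
  simp only [star_sub, mulVec_sub, sub_dotProduct, dotProduct_sub, map_sub, hsymm,
    RCLike.star_def, RCLike.conj_re] at h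
  linarith

theorem star_dotProduct_self_of_norm_eq_one {z : n → 𝕜} (hz : ∀ i, ‖z i‖ = 1) :
    star z ⬝ᵥ z = Fintype.card n := by
  simp [dotProduct, RCLike.conj_mul, hz]

theorem re_star_dotProduct_le_sum_norm {v : n → 𝕜} (hv : ∀ i, ‖v i‖ ≤ 1) (u : n → 𝕜) :
    RCLike.re (star v ⬝ᵥ u) ≤ ∑ i, ‖u i‖ := by
  simp only [dotProduct, Pi.star_apply, map_sum]
  refine Finset.sum_le_sum fun i _ => (RCLike.re_le_norm _).trans ?_
  rw [norm_mul, norm_star]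
  exact mul_le_of_le_one_left (norm_nonneg _) (hv i)

theorem re_star_phase_dotProduct (u : n → 𝕜) :
    RCLike.re (star (fun i => u i / (‖u i‖ : 𝕜)) ⬝ᵥ u) = ∑ i, ‖u i‖ := by
  simp only [dotProduct, Pi.star_apply, map_sum]
  refine Finset.sum_congr rfl fun i _ => ?_
  rw [star_div₀, RCLike.star_def, RCLike.conj_ofReal, div_mul_eq_mul_div, RCLike.conj_mul]
  rcases eq_or_ne (u i) 0 with h | h
  · simp [h]
  · rw [sq, mul_div_assoc, div_self (by simpa using h), mul_one, RCLike.ofReal_re]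

end Matrix

theorem RCLike.norm_div_ofReal_norm {𝕜 : Type*} [RCLike 𝕜] {z : 𝕜} (hz : z ≠ 0) :
    ‖z / (‖z‖ : 𝕜)‖ = 1 := by
  rw [norm_div, RCLike.norm_ofReal, abs_norm, div_self (norm_ne_zero_iff.mpr hz)]

section KLCost

variable {n 𝕜 : Type*} [Fintype n] [RCLike 𝕜]

def klCost (b : n → 𝕜) (M : Matrix n n 𝕜) (z : n → 𝕜) : ℝ :=
  2 * RCLike.re (star z ⬝ᵥ b) + RCLike.re (star z ⬝ᵥ M *ᵥ z)

theorem klCost_eq_of_norm_eq_one [DecidableEq n] (b : n → 𝕜) (M : Matrix n n 𝕜) (lam : ℝ)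
    (z₀ : n → 𝕜) {z : n → 𝕜} (hz : ∀ i, ‖z i‖ = 1) :
    klCost b M z = lam * Fintype.card n - RCLike.re (star z ⬝ᵥ ((lam : 𝕜) • 1 - M) *ᵥ z)
      + 2 * RCLike.re (star z ⬝ᵥ ((lam : 𝕜) • 1 - M) *ᵥ z₀)
      - 2 * RCLike.re (star z ⬝ᵥ (-b + ((lam : 𝕜) • 1 - M) *ᵥ z₀)) := by
  have hnorm : RCLike.re (star z ⬝ᵥ z) = Fintype.card n := by
    rw [star_dotProduct_self_of_norm_eq_one hz]
    exact_mod_cast RCLike.natCast_re _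
  simp only [klCost, sub_mulVec, smul_mulVec, one_mulVec, dotProduct_add, dotProduct_neg,
    dotProduct_sub, dotProduct_smul, smul_eq_mul, map_add, map_neg, map_sub, RCLike.re_ofReal_mul,
    hnorm]
  ring

theorem klCost_phase_le [DecidableEq n] (b : n → 𝕜) {M : Matrix n n 𝕜} (hM : M.IsHermitian)
    {lam : ℝ} (hlam : ∀ i, hM.eigenvalues i ≤ lam) {z₀ : n → 𝕜} (hz₀ : ∀ i, ‖z₀ i‖ = 1)
    {u : n → 𝕜} (hu : u = -b + ((lam : 𝕜) • 1 - M) *ᵥ z₀) (hu0 : ∀ i, u i ≠ 0) :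
    klCost b M (fun i => u i / (‖u i‖ : 𝕜)) ≤ klCost b M z₀ := by
  set Q := (lam : 𝕜) • 1 - M
  set z := fun i => u i / (‖u i‖ : 𝕜)
  have hz : ∀ i, ‖z i‖ = 1 := fun i => RCLike.norm_div_ofReal_norm (hu0 i)
  have hQ := hM.posSemidef_smul_one_sub hlam
  calc klCost b M z
      = lam * Fintype.card n - RCLike.re (star z ⬝ᵥ Q *ᵥ z)
          + 2 * RCLike.re (star z ⬝ᵥ Q *ᵥ z₀) - 2 * ∑ i, ‖u i‖ := by
        rw [klCost_eq_of_norm_eq_one b M lam z₀ hz, ← hu, re_star_phase_dotProduct]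
    _ ≤ lam * Fintype.card n + RCLike.re (star z₀ ⬝ᵥ Q *ᵥ z₀) - 2 * ∑ i, ‖u i‖ := by
        linarith [hQ.two_mul_re_dotProduct_mulVec_le_s12 z z₀]
    _ ≤ lam * Fintype.card n + RCLike.re (star z₀ ⬝ᵥ Q *ᵥ z₀)
          - 2 * RCLike.re (star z₀ ⬝ᵥ u) := by
        linarith [re_star_dotProduct_le_sum_norm (fun i => (hz₀ i).le) u]
    _ = klCost b M z₀ := by
        rw [klCost_eq_of_norm_eq_one b M lam z₀ hz₀, ← hu]
        ring

end KLCost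

theorem mm_descent_kl_general {p k : ℕ}
    (B : Matrix (Fin k) (Fin p) ℂ) (w : Fin p → ℂ)
    (M : Matrix (Fin k) (Fin k) ℂ) (hM : M.IsHermitian)
    (lam : ℝ) (hlam : IsGreatest (Set.range hM.eigenvalues) lam)
    (f : (Fin k → ℂ) → ℝ)
    (hf : ∀ wb, f wb =
      2 * (star wb ⬝ᵥ B *ᵥ w).re + (star wb ⬝ᵥ M *ᵥ wb).re)
    (wb0 : Fin k → ℂ) (hwb0 : ∀ i, ‖wb0 i‖ = 1)
    (u : Fin k → ℂ)
    (hu : u = -(B *ᵥ w) + ((lam : ℂ) • 1 - M) *ᵥ wb0)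
    (hu0 : ∀ i, u i ≠ 0)
    (wbplus : Fin k → ℂ)
    (hwbplus : ∀ i, wbplus i = u i / ((‖u i‖ : ℝ) : ℂ)) :
    (∀ i, ‖wbplus i‖ = 1) ∧ f wbplus ≤ f wb0 := by
  obtain rfl : wbplus = fun i => u i / (‖u i‖ : ℂ) := funext hwbplus
  refine ⟨fun i => RCLike.norm_div_ofReal_norm (hu0 i), ?_⟩
  rw [hf, hf]
  exact klCost_phase_le (B *ᵥ w) hM (fun i => hlam.2 ⟨i, rfl⟩) hwb0 hu hu0

/-- Descent property of the MM iteration for the KL cost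
`f(w̄) = 2·Re(w̄ᴴ B w) + Re(w̄ᴴ M w̄)`: with `u = −B w + (λ·I − M) w̄⁰` having all
entries nonzero, the MM update `w̄⁺ = Φ_𝕋(u)` lies on the torus and satisfies
`f(w̄⁺) ≤ f(w̄⁰)`. -/
theorem mm_descent_kl {p k : ℕ} (hk : 1 ≤ k)
    (B : Matrix (Fin k) (Fin p) ℂ) (w : Fin p → ℂ)
    (M : Matrix (Fin k) (Fin k) ℂ) (hM : M.IsHermitian)
    (lam : ℝ) (hlam : IsGreatest (Set.range hM.eigenvalues) lam)
    (f : (Fin k → ℂ) → ℝ)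
    (hf : ∀ wb, f wb =
      2 * (star wb ⬝ᵥ B *ᵥ w).re + (star wb ⬝ᵥ M *ᵥ wb).re)
    (wb0 : Fin k → ℂ) (hwb0 : ∀ i, ‖wb0 i‖ = 1)
    (u : Fin k → ℂ)
    (hu : u = -(B *ᵥ w) + ((lam : ℂ) • 1 - M) *ᵥ wb0)
    (hu0 : ∀ i, u i ≠ 0)
    (wbplus : Fin k → ℂ)
    (hwbplus : ∀ i, wbplus i = u i / ((‖u i‖ : ℝ) : ℂ)) :
    (∀ i, ‖wbplus i‖ = 1) ∧ f wbplus ≤ f wb0 :=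
  mm_descent_kl_general B w M hM lam hlam f hf wb0 hwb0 u hu hu0 wbplus hwbplus
end
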